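/- arXiv:2512.01026 — 5 statements merged into one kernel-verified Lean document; each statement's English description precedes it below -/
import Mathlib

section
/- Let X be a geometric random variable with P(X = k) = (1-p)p^k and let a = (1+p)/(1-p) (so p = (a-1)/(a+1), a > 1). Then the fourth central moment satisfies E[(X - E X)^4] ≤ (5/8)(a+1)^4. -/
/-!
The factorial moments of the geometric weights are `∑ₖ k(k-1)⋯(k-j+1) pᵏ = j! pʲ / (1-p)^(j+1)`.
Expanding `(k - μ)⁴` in the falling-factorial basis therefore gives the fourth central moment
`p (1 + 7p + p²) / (1-p)⁴`, whose numerator is below `10`, while `(5/8)(a+1)⁴ = 10 / (1-p)⁴`.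
-/

open Nat

theorem hasSum_descFactorial_mul_geometric {𝕜 : Type*} [NormedField 𝕜]
    (j : ℕ) {r : 𝕜} (hr : ‖r‖ < 1) :
    HasSum (fun n : ℕ ↦ (n.descFactorial j : 𝕜) * r ^ n) (j ! * r ^ j / (1 - r) ^ (j + 1)) := by
  have hvanish : ∑ i ∈ Finset.range j, (i.descFactorial j : 𝕜) * r ^ i = 0 :=
    Finset.sum_eq_zero fun i hi ↦ by
      rw [Nat.descFactorial_eq_zero_iff_lt.mpr (Finset.mem_range.mp hi), Nat.cast_zero, zero_mul]
  rw [← hasSum_nat_add_iff' j, hvanish, sub_zero, div_eq_mul_one_div]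
  convert! (hasSum_choose_mul_geometric_of_norm_lt_one j hr).mul_left (j ! * r ^ j : 𝕜) using 2
  rw [Nat.descFactorial_eq_factorial_mul_choose, pow_add]
  push_cast
  ring

theorem Nat.cast_sub_pow_four_eq_descFactorial {R : Type*} [CommRing R] (n : ℕ) (μ : R) :
    ((n : R) - μ) ^ 4 = n.descFactorial 4 + (6 - 4 * μ) * n.descFactorial 3
      + (7 - 12 * μ + 6 * μ ^ 2) * n.descFactorial 2
      + (1 - 4 * μ + 6 * μ ^ 2 - 4 * μ ^ 3) * n.descFactorial 1 + μ ^ 4 * n.descFactorial 0 := by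
  simp only [← descPochhammer_eval_eq_descFactorial, descPochhammer_succ_eval,
    descPochhammer_zero, Polynomial.eval_one]
  push_cast
  ring

theorem hasSum_sub_pow_four_mul_geometric {𝕜 : Type*} [NormedField 𝕜] {p : 𝕜} (hp : ‖p‖ < 1) :
    HasSum (fun k : ℕ ↦ ((k : 𝕜) - p / (1 - p)) ^ 4 * ((1 - p) * p ^ k))
      (p * (1 + 7 * p + p ^ 2) / (1 - p) ^ 4) := by
  have hq : 1 - p ≠ 0 := sub_ne_zero.mpr (by rintro rfl; simp at hp)
  set μ := p / (1 - p)
  have H := ((((hasSum_descFactorial_mul_geometric 4 hp).add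
    ((hasSum_descFactorial_mul_geometric 3 hp).mul_left (6 - 4 * μ))).add
    ((hasSum_descFactorial_mul_geometric 2 hp).mul_left (7 - 12 * μ + 6 * μ ^ 2))).add
    ((hasSum_descFactorial_mul_geometric 1 hp).mul_left (1 - 4 * μ + 6 * μ ^ 2 - 4 * μ ^ 3))).add
    ((hasSum_descFactorial_mul_geometric 0 hp).mul_left (μ ^ 4))
  convert! H.mul_left (1 - p) using 1
  · funext k
    rw [Nat.cast_sub_pow_four_eq_descFactorial]
    ring
  · simp only [μ]
    norm_num [Nat.factorial]
    field_simp
    ring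

/-- For the geometric distribution `P(X = k) = (1-p) p^k` with `p ∈ (0,1)` and
`a = (1+p)/(1-p)` (so `a > 1`), the fourth central moment (the mean being `p/(1-p)`)
is at most `(5/8) (a+1)^4`. -/
theorem geometric_fourth_central_moment (p a : ℝ) (hp0 : 0 < p) (hp1 : p < 1)
    (ha : a = (1 + p) / (1 - p)) :
    ∃ S : ℝ,
      HasSum (fun k : ℕ => ((k : ℝ) - p / (1 - p)) ^ 4 * ((1 - p) * p ^ k)) S ∧
      S ≤ (5 / 8) * (a + 1) ^ 4 := by
  have hq : 0 < 1 - p := sub_pos.mpr hp1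
  have hnorm : ‖p‖ < 1 := by rwa [Real.norm_of_nonneg hp0.le]
  refine ⟨_, hasSum_sub_pow_four_mul_geometric hnorm, ?_⟩
  have ha1 : a + 1 = 2 / (1 - p) := by
    rw [ha]
    field_simp
    ring
  calc p * (1 + 7 * p + p ^ 2) / (1 - p) ^ 4 ≤ 10 / (1 - p) ^ 4 := by gcongr; nlinarith
    _ = 5 / 8 * (a + 1) ^ 4 := by rw [ha1, div_pow]; ring
end

section
/- Let q₀, q₁ be the probability mass functions of geometric distributions Geo(p₀), Geo(p₁), with a_i = (1+p_i)/(1-p_i) (so a_i > 1). Then for t ∈ (0,1), ∑_{k=0}^∞ q₀(k)^t q₁(k)^{1-t} = 2 / [(a₀+1)^t(a₁+1)^{1-t} - (a₀-1)^t(a₁-1)^{1-t}]. -/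
/-- Chernoff computation for two geometric laws `Geo(pᵢ)` with `pᵢ = (aᵢ-1)/(aᵢ+1)`,
`aᵢ > 1`: for `t ∈ (0,1)`,
`∑ₖ q₀(k)^t q₁(k)^{1-t} = 2 / ((a₀+1)^t (a₁+1)^{1-t} − (a₀-1)^t (a₁-1)^{1-t})`. -/
theorem geometric_chernoff_sum (a₀ a₁ t : ℝ) (ha₀ : 1 < a₀) (ha₁ : 1 < a₁)
    (ht0 : 0 < t) (ht1 : t < 1) :
    HasSum
      (fun k : ℕ =>
        ((1 - (a₀ - 1) / (a₀ + 1)) * ((a₀ - 1) / (a₀ + 1)) ^ k) ^ t *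
          ((1 - (a₁ - 1) / (a₁ + 1)) * ((a₁ - 1) / (a₁ + 1)) ^ k) ^ (1 - t))
      (2 / ((a₀ + 1) ^ t * (a₁ + 1) ^ (1 - t) - (a₀ - 1) ^ t * (a₁ - 1) ^ (1 - t))) := by
  have h0 : (0:ℝ) < a₀ + 1 := by linarith
  have h1 : (0:ℝ) < a₁ + 1 := by linarith
  set p₀ : ℝ := (a₀ - 1) / (a₀ + 1) with hp₀def
  set p₁ : ℝ := (a₁ - 1) / (a₁ + 1) with hp₁def
  have hp₀0 : 0 ≤ p₀ := div_nonneg (by linarith) h0.le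
  have hp₁0 : 0 ≤ p₁ := div_nonneg (by linarith) h1.le
  have hp₀1 : p₀ < 1 := (div_lt_one h0).mpr (by linarith)
  have hp₁1 : p₁ < 1 := (div_lt_one h1).mpr (by linarith)
  have hc₀ : 1 - p₀ = 2 / (a₀ + 1) := by rw [hp₀def]; field_simp; ring
  have hc₁ : 1 - p₁ = 2 / (a₁ + 1) := by rw [hp₁def]; field_simp; ring
  have ht1' : 0 < 1 - t := by linarith
  set r : ℝ := p₀ ^ t * p₁ ^ (1 - t) with hrdef
  have hr0 : 0 ≤ r := mul_nonneg (Real.rpow_nonneg hp₀0 t) (Real.rpow_nonneg hp₁0 _)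
  have hx1 : p₀ ^ t < 1 := Real.rpow_lt_one hp₀0 hp₀1 ht0
  have hy1 : p₁ ^ (1 - t) ≤ 1 := Real.rpow_le_one hp₁0 hp₁1.le ht1'.le
  have hr1 : r < 1 :=
    (mul_le_of_le_one_right (Real.rpow_nonneg hp₀0 t) hy1).trans_lt hx1
  set C : ℝ := (1 - p₀) ^ t * (1 - p₁) ^ (1 - t) with hCdef
  have hterm : ∀ k : ℕ,
      ((1 - p₀) * p₀ ^ k) ^ t * ((1 - p₁) * p₁ ^ k) ^ (1 - t) = C * r ^ k := by
    intro k
    have hpow : ∀ (x : ℝ), 0 ≤ x → ∀ s : ℝ, (x ^ k) ^ s = (x ^ s) ^ k := by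
      intro x hx s
      rw [← Real.rpow_natCast x k, ← Real.rpow_mul hx, mul_comm,
        Real.rpow_mul hx, Real.rpow_natCast]
    rw [Real.mul_rpow (by linarith) (pow_nonneg hp₀0 k),
      Real.mul_rpow (by linarith) (pow_nonneg hp₁0 k),
      hpow p₀ hp₀0 t, hpow p₁ hp₁0 (1 - t), hCdef, hrdef, mul_pow]
    ring
  have hgeo : HasSum (fun k : ℕ => C * r ^ k) (C * (1 - r)⁻¹) :=
    (hasSum_geometric_of_lt_one hr0 hr1).mul_left C
  have hA : (0:ℝ) < (a₀ + 1) ^ t * (a₁ + 1) ^ (1 - t) :=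
    mul_pos (Real.rpow_pos_of_pos h0 t) (Real.rpow_pos_of_pos h1 _)
  have hCval : C = 2 / ((a₀ + 1) ^ t * (a₁ + 1) ^ (1 - t)) := by
    rw [hCdef, hc₀, hc₁, Real.div_rpow (by norm_num) h0.le,
      Real.div_rpow (by norm_num) h1.le, div_mul_div_comm,
      ← Real.rpow_add (by norm_num : (0:ℝ) < 2)]
    norm_num
  have hrval : r = ((a₀ - 1) ^ t * (a₁ - 1) ^ (1 - t)) /
      ((a₀ + 1) ^ t * (a₁ + 1) ^ (1 - t)) := by
    rw [hrdef, hp₀def, hp₁def, Real.div_rpow (by linarith) h0.le,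
      Real.div_rpow (by linarith) h1.le, div_mul_div_comm]
  have hAB : (a₀ - 1) ^ t * (a₁ - 1) ^ (1 - t) < (a₀ + 1) ^ t * (a₁ + 1) ^ (1 - t) := by
    have := hr1
    rw [hrval, div_lt_one hA] at this
    exact this
  have key : ∀ A B : ℝ, 0 < A → B < A → (2 / A) * (1 - B / A)⁻¹ = 2 / (A - B) := by
    intro A B hApos hBA
    have hAne : A ≠ 0 := hApos.ne'
    have hABne : A - B ≠ 0 := sub_ne_zero.mpr hBA.ne'
    field_simp
  have : C * (1 - r)⁻¹ =
      2 / ((a₀ + 1) ^ t * (a₁ + 1) ^ (1 - t) - (a₀ - 1) ^ t * (a₁ - 1) ^ (1 - t)) := by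
    rw [hCval, hrval, key _ _ hA hAB]
  rw [← this]
  exact hgeo.congr_fun fun k => (hterm k)
end

section
/- Let a₁, a₂ > 1 and p_j = (a_j - 1)/(a_j + 1), j = 1,2. Then for any r > 0 the squared Hellinger distance between negative binomial distributions satisfies H²(NB(r,p₁), NB(r,p₂)) ≤ r(a₁ - a₂)² / ((a₁-1)(a₂-1)). -/
/-!
The Bhattacharyya coefficient `∑ₖ √(q₁(k) q₂(k))` of `NB(r,p₁)` and `NB(r,p₂)` is, up to a
constant factor, the total mass of `NB(r, √(p₁p₂))`, so the negative binomial series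
`∑ₖ Γ(k+r)/(k! Γ(r)) xᵏ = (1-x)^(-r)` evaluates it as `ρ^r` with `ρ = 2/(A - B)`, where
`A = √((a₁+1)(a₂+1))` and `B = √((a₁-1)(a₂-1))`. Hence `H² = 2 - 2ρ^r ≤ 2r(ρ⁻¹ - 1) = r(A - B - 2)`
by `log x ≤ x - 1`, and rationalising twice gives
`A - B - 2 = 2(a₁-a₂)² / ((A-B+2)(a₁a₂-1+AB)) ≤ (a₁-a₂)² / B²`.
-/

/-- Mass function of the negative binomial distribution `NB(r,p)`:
`P(X = k) = Γ(k+r)/(k! Γ(r)) (1-p)^r p^k`. -/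
noncomputable def nbMass (r p : ℝ) (k : ℕ) : ℝ :=
  Real.Gamma (k + r) / (k.factorial * Real.Gamma r) * (1 - p) ^ r * p ^ k

open Polynomial

theorem Real.Gamma_add_nat_eq_ascPochhammer_mul {r : ℝ} (hr : ∀ k : ℕ, r ≠ -k) (n : ℕ) :
    Real.Gamma (r + n) = (ascPochhammer ℝ n).eval r * Real.Gamma r := by
  induction n with
  | zero => simp
  | succ n ih =>
    have hrn : r + n ≠ 0 := fun h => hr n (eq_neg_of_add_eq_zero_left h)
    rw [Nat.cast_succ, ← add_assoc, Real.Gamma_add_one hrn, ih, ascPochhammer_succ_right,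
      eval_mul, eval_add, eval_X, eval_natCast]
    ring

theorem Ring.choose_add_sub_one_eq_ascPochhammer_div {R : Type*} [Field R] [CharZero R]
    (r : R) (n : ℕ) :
    Ring.choose (r + n - 1) n = (ascPochhammer R n).eval r / n.factorial := by
  rw [← Ring.multichoose_eq, eq_div_iff (Nat.cast_ne_zero.mpr n.factorial_ne_zero), mul_comm,
    ← nsmul_eq_mul, Ring.factorial_nsmul_multichoose_eq_ascPochhammer,
    ascPochhammer_smeval_eq_eval]

theorem Real.hasSum_Gamma_div_mul_pow {r x : ℝ} (hr : ∀ k : ℕ, r ≠ -k) (hx : |x| < 1) :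
    HasSum (fun k : ℕ => Real.Gamma (k + r) / (k.factorial * Real.Gamma r) * x ^ k)
      ((1 - x) ^ (-r)) := by
  have h := (Real.one_div_one_sub_rpow_hasFPowerSeriesOnBall_zero r).hasSum
    (y := x) (by simpa [enorm_eq_nnnorm, ← NNReal.coe_lt_one] using hx)
  simp only [FormalMultilinearSeries.ofScalars_apply_eq, zero_add, smul_eq_mul] at h
  rw [Real.rpow_neg (by linarith [abs_lt.mp hx]), ← one_div]
  refine h.congr_fun fun k => ?_
  rw [Ring.choose_add_sub_one_eq_ascPochhammer_div, add_comm (k : ℝ),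
    Real.Gamma_add_nat_eq_ascPochhammer_mul hr]
  field_simp [Real.Gamma_ne_zero hr]

lemma sub_one_div_add_one_mem_Ico {a : ℝ} (ha : 1 < a) : (a - 1) / (a + 1) ∈ Set.Ico 0 1 :=
  ⟨div_nonneg (by linarith) (by linarith), (div_lt_one (by linarith)).mpr (by linarith)⟩

lemma abs_lt_one_of_mem_Ico {p : ℝ} (hp : p ∈ Set.Ico 0 1) : |p| < 1 :=
  abs_lt.mpr ⟨by linarith [hp.1], hp.2⟩

lemma sqrt_mul_lt_one {p₁ p₂ : ℝ} (hp₁ : p₁ ∈ Set.Ico 0 1) (hp₂ : p₂ ∈ Set.Ico 0 1) :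
    √(p₁ * p₂) < 1 := by
  rw [Real.sqrt_lt' one_pos, one_pow]
  exact mul_lt_one_of_nonneg_of_lt_one_left hp₁.1 hp₁.2 hp₂.2.le

lemma nbMass_nonneg {r p : ℝ} (hr : 0 < r) (hp₀ : 0 ≤ p) (hp₁ : p ≤ 1) (k : ℕ) :
    0 ≤ nbMass r p k := by
  have := Real.Gamma_pos_of_pos hr
  have := Real.Gamma_pos_of_pos (by positivity : 0 < k + r)
  have := Real.rpow_nonneg (sub_nonneg.mpr hp₁) r
  unfold nbMass
  positivity

lemma hasSum_nbMass {r p : ℝ} (hr : 0 < r) (hp : |p| < 1) : HasSum (nbMass r p) 1 := by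
  have h1p : 0 < 1 - p := by linarith [abs_lt.mp hp]
  have hr' (k : ℕ) : r ≠ -k := by linarith [k.cast_nonneg (α := ℝ)]
  have h := (Real.hasSum_Gamma_div_mul_pow hr' hp).mul_right ((1 - p) ^ r)
  rw [← Real.rpow_add h1p, neg_add_cancel, Real.rpow_zero] at h
  exact h.congr_fun fun k => by unfold nbMass; ring

/-- The Bhattacharyya coefficient of `NB(r,p₁)` and `NB(r,p₂)` is the `r`-th power of this. -/
noncomputable def nbAffinityBase (p₁ p₂ : ℝ) : ℝ :=
  √((1 - p₁) * (1 - p₂)) / (1 - √(p₁ * p₂))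

lemma sqrt_nbMass_mul_sqrt_nbMass {r p₁ p₂ : ℝ} (hr : 0 < r) (hp₁ : p₁ ∈ Set.Ico 0 1)
    (hp₂ : p₂ ∈ Set.Ico 0 1) (k : ℕ) :
    √(nbMass r p₁ k) * √(nbMass r p₂ k) = nbAffinityBase p₁ p₂ ^ r * nbMass r √(p₁ * p₂) k := by
  have ht : 0 < 1 - √(p₁ * p₂) := sub_pos.mpr (sqrt_mul_lt_one hp₁ hp₂)
  obtain ⟨h₁0, h₁1⟩ := hp₁
  obtain ⟨h₂0, h₂1⟩ := hp₂
  set s := √((1 - p₁) * (1 - p₂))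
  set t := √(p₁ * p₂)
  have hC : 0 ≤ Real.Gamma (k + r) / (k.factorial * Real.Gamma r) := by
    have := Real.Gamma_pos_of_pos hr
    have := Real.Gamma_pos_of_pos (by positivity : 0 < k + r)
    positivity
  have hprod : nbMass r p₁ k * nbMass r p₂ k =
      (Real.Gamma (k + r) / (k.factorial * Real.Gamma r) * s ^ r * t ^ k) ^ 2 := by
    have hs : (s ^ r) ^ 2 = (1 - p₁) ^ r * (1 - p₂) ^ r := by
      rw [Real.rpow_pow_comm (Real.sqrt_nonneg _), Real.sq_sqrt (by nlinarith),
        Real.mul_rpow (by linarith) (by linarith)]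
    have ht2 : (t ^ k) ^ 2 = p₁ ^ k * p₂ ^ k := by
      rw [← pow_mul, mul_comm, pow_mul, Real.sq_sqrt (mul_nonneg h₁0 h₂0), mul_pow]
    rw [mul_pow, mul_pow, hs, ht2]
    unfold nbMass
    ring
  rw [← Real.sqrt_mul (nbMass_nonneg hr h₁0 h₁1.le k), hprod, Real.sqrt_sq (by positivity),
    nbAffinityBase, nbMass, Real.div_rpow (Real.sqrt_nonneg _) ht.le]
  field_simp [(Real.rpow_pos_of_pos ht r).ne']
  ring

lemma hasSum_sqrt_nbMass_mul_sqrt_nbMass {r p₁ p₂ : ℝ} (hr : 0 < r) (hp₁ : p₁ ∈ Set.Ico 0 1)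
    (hp₂ : p₂ ∈ Set.Ico 0 1) :
    HasSum (fun k => √(nbMass r p₁ k) * √(nbMass r p₂ k)) (nbAffinityBase p₁ p₂ ^ r) := by
  have ht : |√(p₁ * p₂)| < 1 := by
    rw [abs_of_nonneg (Real.sqrt_nonneg _)]
    exact sqrt_mul_lt_one hp₁ hp₂
  simpa only [mul_one, sqrt_nbMass_mul_sqrt_nbMass hr hp₁ hp₂] using
    (hasSum_nbMass hr ht).mul_left (nbAffinityBase p₁ p₂ ^ r)

lemma hasSum_sq_sqrt_sub_sqrt {ι : Type*} {q₁ q₂ : ι → ℝ} {s₁ s₂ ρ : ℝ} (hq₁ : HasSum q₁ s₁)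
    (hq₂ : HasSum q₂ s₂) (hq₁₀ : ∀ i, 0 ≤ q₁ i) (hq₂₀ : ∀ i, 0 ≤ q₂ i)
    (hρ : HasSum (fun i => √(q₁ i) * √(q₂ i)) ρ) :
    HasSum (fun i => (√(q₁ i) - √(q₂ i)) ^ 2) (s₁ + s₂ - 2 * ρ) :=
  ((hq₁.add hq₂).sub (hρ.mul_left 2)).congr_fun fun i => by
    rw [sub_sq, Real.sq_sqrt (hq₁₀ i), Real.sq_sqrt (hq₂₀ i)]
    ring

lemma one_sub_rpow_le_mul_inv_sub_one {x r : ℝ} (hx : 0 < x) (hr : 0 ≤ r) :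
    1 - x ^ r ≤ r * (x⁻¹ - 1) := by
  have h₁ := Real.log_le_sub_one_of_pos (Real.rpow_pos_of_pos hx r)
  have h₂ := mul_le_mul_of_nonneg_left (Real.log_le_sub_one_of_pos (inv_pos.mpr hx)) hr
  rw [Real.log_rpow hx] at h₁
  rw [Real.log_inv] at h₂
  linarith

lemma nbAffinityBase_eq {a₁ a₂ : ℝ} (ha₁ : 1 < a₁) (ha₂ : 1 < a₂) :
    nbAffinityBase ((a₁ - 1) / (a₁ + 1)) ((a₂ - 1) / (a₂ + 1)) =
      2 / (√((a₁ + 1) * (a₂ + 1)) - √((a₁ - 1) * (a₂ - 1))) := by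
  have hA : 0 < √((a₁ + 1) * (a₂ + 1)) := Real.sqrt_pos.mpr (by positivity)
  have e₁ : (1 - (a₁ - 1) / (a₁ + 1)) * (1 - (a₂ - 1) / (a₂ + 1)) =
      2 ^ 2 / ((a₁ + 1) * (a₂ + 1)) := by
    field_simp
    ring
  have e₂ : (a₁ - 1) / (a₁ + 1) * ((a₂ - 1) / (a₂ + 1)) =
      ((a₁ - 1) * (a₂ - 1)) / ((a₁ + 1) * (a₂ + 1)) := by
    field_simp
  rw [nbAffinityBase, e₁, e₂, Real.sqrt_div' _ (by positivity), Real.sqrt_div' _ (by positivity),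
    Real.sqrt_sq zero_le_two]
  field_simp

lemma sqrt_mul_sub_sqrt_mul_sub_two_le {a₁ a₂ : ℝ} (ha₁ : 1 < a₁) (ha₂ : 1 < a₂) :
    √((a₁ + 1) * (a₂ + 1)) - √((a₁ - 1) * (a₂ - 1)) - 2 ≤
      (a₁ - a₂) ^ 2 / ((a₁ - 1) * (a₂ - 1)) := by
  set A := √((a₁ + 1) * (a₂ + 1))
  set B := √((a₁ - 1) * (a₂ - 1))
  have hA : A ^ 2 = (a₁ + 1) * (a₂ + 1) := Real.sq_sqrt (by positivity)
  have hB : B ^ 2 = (a₁ - 1) * (a₂ - 1) := Real.sq_sqrt (by nlinarith)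
  have hB₀ : 0 < B := Real.sqrt_pos.mpr (by nlinarith)
  have hBA : B ≤ A := Real.sqrt_le_sqrt (by nlinarith)
  -- `(A - B)² - 4 = 2 (a₁a₂ - 1 - AB)` and `(a₁a₂ - 1)² - A²B² = (a₁ - a₂)²`
  have key : (A - B - 2) * ((A - B + 2) * (a₁ * a₂ - 1 + A * B)) = 2 * (a₁ - a₂) ^ 2 := by
    linear_combination (a₁ * a₂ - 1 + A * B - 2 * B ^ 2) * hA +
      (a₁ * a₂ - 1 + A * B - 2 * (a₁ + 1) * (a₂ + 1)) * hB
  have hden : 2 * B ^ 2 ≤ (A - B + 2) * (a₁ * a₂ - 1 + A * B) := by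
    nlinarith [mul_le_mul_of_nonneg_left hBA hB₀.le]
  have hD : 0 < (A - B + 2) * (a₁ * a₂ - 1 + A * B) := lt_of_lt_of_le (by positivity) hden
  rw [eq_div_of_mul_eq hD.ne' key, ← hB]
  calc 2 * (a₁ - a₂) ^ 2 / ((A - B + 2) * (a₁ * a₂ - 1 + A * B))
      ≤ 2 * (a₁ - a₂) ^ 2 / (2 * B ^ 2) := by gcongr
    _ = (a₁ - a₂) ^ 2 / B ^ 2 := by field_simp

/-- For `a₁, a₂ > 1` and `p_j = (a_j-1)/(a_j+1)`, the squared Hellinger distance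
`∑ₖ (√q₁(k) - √q₂(k))²` between `NB(r,p₁)` and `NB(r,p₂)` is at most
`r (a₁-a₂)² / ((a₁-1)(a₂-1))`, for every `r > 0`. -/
theorem nb_hellinger_bound (r a₁ a₂ : ℝ) (hr : 0 < r) (ha₁ : 1 < a₁) (ha₂ : 1 < a₂) :
    (∑' k : ℕ,
        (Real.sqrt (nbMass r ((a₁ - 1) / (a₁ + 1)) k)
          - Real.sqrt (nbMass r ((a₂ - 1) / (a₂ + 1)) k)) ^ 2)
      ≤ r * (a₁ - a₂) ^ 2 / ((a₁ - 1) * (a₂ - 1)) := by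
  have hp₁ := sub_one_div_add_one_mem_Ico ha₁
  have hp₂ := sub_one_div_add_one_mem_Ico ha₂
  set A := √((a₁ + 1) * (a₂ + 1))
  set B := √((a₁ - 1) * (a₂ - 1))
  have hBA : B < A := Real.sqrt_lt_sqrt (by nlinarith) (by nlinarith)
  have hH := hasSum_sq_sqrt_sub_sqrt (hasSum_nbMass hr (abs_lt_one_of_mem_Ico hp₁))
    (hasSum_nbMass hr (abs_lt_one_of_mem_Ico hp₂)) (nbMass_nonneg hr hp₁.1 hp₁.2.le)
    (nbMass_nonneg hr hp₂.1 hp₂.2.le) (hasSum_sqrt_nbMass_mul_sqrt_nbMass hr hp₁ hp₂)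
  rw [nbAffinityBase_eq ha₁ ha₂] at hH
  calc _ = 1 + 1 - 2 * (2 / (A - B)) ^ r := hH.tsum_eq
    _ ≤ 2 * (r * ((2 / (A - B))⁻¹ - 1)) := by
      linarith [one_sub_rpow_le_mul_inv_sub_one (div_pos two_pos (sub_pos.mpr hBA)) hr.le]
    _ = r * (A - B - 2) := by rw [inv_div]; ring
    _ ≤ r * ((a₁ - a₂) ^ 2 / ((a₁ - 1) * (a₂ - 1))) :=
      mul_le_mul_of_nonneg_left (sqrt_mul_sub_sqrt_mul_sub_two_le ha₁ ha₂) hr.le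
    _ = _ := (mul_div_assoc ..).symm
end

section
/- Let m, n be positive integers with n < m < 2(n-1) and m odd. Let a have Fourier coefficients a_k with a₀² + ∑_j |j|^{2α}|a_j|² ≤ M for some α > 1/2. Let A_n(a) be the n×n Toeplitz matrix with entries a_{k-j}, and let Ã_{n,m}(a) be the upper-left n×n submatrix of the m×m circulant matrix whose representing vector is (a₀, a₋₁, ..., a_{-(m-1)/2}, a_{(m-1)/2}, ..., a₁). Then the squared Hilbert–Schmidt norm satisfies ‖A_n(a) − Ã_{n,m}(a)‖₂² = 2∑_{k=(m+1)/2}^{n-1} (n-k)|a_k − ā_{m-k}|² ≤ 4(m−n+1)^{1−2α} M. -/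
/-!
The entry of `A − Ã` at `(i, j)` depends only on `d = j − i`, vanishes for `|d| ≤ (m−1)/2`, and
its squared modulus is even in `d` because `c` is conjugate-symmetric; summing over the diagonals
of the `n × n` square gives the identity, the wrapped entry `c_{k−m}` being `conj c_{m−k}`.
For `(m+1)/2 ≤ k ≤ n−1` both `k` and `m − k` are at least `m − n + 1` and at least `n − k`, so
`n − k ≤ (m−n+1)^{1−2α} k^{2α}` and likewise for `m − k`. As `m` is odd, `k` and `m − k` run over
disjoint sets of indices, so the Sobolev sum bounds the total.
-/

open Finset ComplexConjugate

theorem sum_range_sum_range_sub_eq {R : Type*} [CommRing R] (g : ℤ → R)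
    (hg : ∀ d, g (-d) = g d) (h0 : g 0 = 0) (n : ℕ) :
    ∑ i ∈ range n, ∑ j ∈ range n, g (j - i) = 2 * ∑ d ∈ range n, ((n : R) - d) * g d := by
  induction n with
  | zero => simp
  | succ n ih =>
    have hrow : ∑ i ∈ range n, g (n - i) = ∑ d ∈ range (n + 1), g d := by
      rw [← sum_range_reflect, sum_range_succ', Nat.cast_zero, h0, add_zero]
      refine sum_congr rfl fun i hi => congrArg g ?_
      have := mem_range.mp hi
      omega
    have hcol : ∑ j ∈ range n, g (j - n) = ∑ i ∈ range n, g (n - i) :=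
      sum_congr rfl fun j _ => by rw [← hg, neg_sub]
    have hweights : ∑ d ∈ range (n + 1), ((n + 1 : ℕ) - d : R) * g d
        = ∑ d ∈ range n, ((n : R) - d) * g d + ∑ d ∈ range (n + 1), g d := by
      simp only [Nat.cast_succ, add_sub_right_comm _ (1 : R), add_mul, one_mul, sum_add_distrib,
        sum_range_succ _ n, sub_self, zero_mul, zero_add, add_assoc]
    rw [hweights, mul_add, ← ih, ← hrow]
    simp only [sum_range_succ _ n, sum_add_distrib, hcol, sub_self, h0]
    ring

theorem sum_add_sum_sub_le_tsum {f : ℤ → ℝ} (hf : 0 ≤ f) (hsum : Summable f) (a : ℤ)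
    {s : Finset ℤ} (hs : ∀ k ∈ s, a - k ∉ s) : ∑ k ∈ s, (f k + f (a - k)) ≤ ∑' k, f k := by
  set s' := s.map (Equiv.subLeft a).toEmbedding
  have hdisj : Disjoint s s' := by
    simp only [s', disjoint_left, mem_map, Equiv.coe_toEmbedding, Equiv.subLeft_apply]
    rintro _ hk ⟨l, hl, rfl⟩
    exact hs l hl hk
  have hreflect : ∑ k ∈ s, f (a - k) = ∑ k ∈ s', f k :=
    (sum_map s (Equiv.subLeft a).toEmbedding f).symm
  rw [sum_add_distrib, hreflect, ← sum_union hdisj]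
  exact hsum.sum_le_tsum _ fun k _ => hf k

theorem le_rpow_mul_rpow_of_le {s L x y : ℝ} (hs : 1 ≤ s) (hL : 0 < L) (hLx : L ≤ x)
    (hyx : y ≤ x) : y ≤ L ^ (1 - s) * x ^ s := by
  have hx : 0 < x := hL.trans_le hLx
  calc y ≤ x := hyx
    _ = x ^ (1 - s) * x ^ s := by rw [← Real.rpow_add hx, sub_add_cancel, Real.rpow_one]
    _ ≤ L ^ (1 - s) * x ^ s := by
      gcongr ?_ * _
      exact Real.rpow_le_rpow_of_nonpos hL hLx (by linarith)

def circulantSymbol (m : ℕ) (c : ℤ → ℂ) (d : ℤ) : ℂ :=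
  if d.natAbs ≤ (m - 1) / 2 then c d else if 0 < d then c (d - m) else c (d + m)

theorem circulantSymbol_neg {c : ℤ → ℂ} (hconj : ∀ k, c (-k) = conj (c k)) (m : ℕ) (d : ℤ) :
    circulantSymbol m c (-d) = conj (circulantSymbol m c d) := by
  unfold circulantSymbol
  rw [Int.natAbs_neg]
  split_ifs <;> first
    | omega
    | (rw [← hconj]; congr 1; omega)
    | rw [← hconj]

theorem circulantSymbol_of_natAbs_le (m : ℕ) (c : ℤ → ℂ) {d : ℤ} (hd : d.natAbs ≤ (m - 1) / 2) :
    circulantSymbol m c d = c d := if_pos hd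

theorem circulantSymbol_of_lt (m : ℕ) (c : ℤ → ℂ) {d : ℤ} (hd : ((m - 1) / 2 : ℕ) < d) :
    circulantSymbol m c d = c (d - m) := by
  rw [circulantSymbol, if_neg (by omega), if_pos (by omega)]

theorem sum_fin_sum_fin_norm_sq_sub_circulantSymbol {c : ℤ → ℂ}
    (hconj : ∀ k, c (-k) = conj (c k)) (n : ℕ) {m : ℕ} (hm : 0 < m) :
    ∑ i : Fin n, ∑ j : Fin n, ‖c (j - i) - circulantSymbol m c (j - i)‖ ^ 2
      = 2 * ∑ k ∈ Icc (((m : ℤ) + 1) / 2) ((n : ℤ) - 1),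
          ((n : ℝ) - k) * ‖c k - conj (c (m - k))‖ ^ 2 := by
  set g : ℤ → ℝ := fun d => ‖c d - circulantSymbol m c d‖ ^ 2
  have hg : ∀ d, g (-d) = g d := fun d => by
    simp only [g, hconj, circulantSymbol_neg hconj, ← map_sub, Complex.norm_conj]
  have h0 : g 0 = 0 := by simp [g, circulantSymbol]
  rw [Fin.sum_univ_eq_sum_range (fun i => ∑ j : Fin n, g (j - i)) n,
    sum_congr rfl fun (i : ℕ) _ => Fin.sum_univ_eq_sum_range (fun j => g (j - i)) n,
    sum_range_sum_range_sub_eq g hg h0]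
  congr 1
  have hIcc : Icc (((m : ℤ) + 1) / 2) ((n : ℤ) - 1) ⊆ Ico 0 n := fun k hk => by
    simp only [mem_Icc, mem_Ico] at hk ⊢
    omega
  calc ∑ d ∈ range n, ((n : ℝ) - d) * g d = ∑ d ∈ Ico (0 : ℤ) n, ((n : ℝ) - d) * g d := by
        simp [Int.Ico_eq_finset_map, sum_map]
    _ = ∑ k ∈ Icc (((m : ℤ) + 1) / 2) ((n : ℤ) - 1), ((n : ℝ) - k) * g k := by
        refine (sum_subset hIcc fun d hd hdI => ?_).symm
        simp only [mem_Icc, mem_Ico] at hd hdI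
        simp [g, circulantSymbol_of_natAbs_le m c (show d.natAbs ≤ (m - 1) / 2 by omega)]
    _ = _ := sum_congr rfl fun k hk => by
        simp only [mem_Icc] at hk
        rw [show g k = _ from congrArg (‖c k - ·‖ ^ 2) (circulantSymbol_of_lt m c (by omega)),
          ← hconj, neg_sub]

noncomputable def sobolevSummand (α : ℝ) (c : ℤ → ℂ) (j : ℤ) : ℝ :=
  (j.natAbs : ℝ) ^ (2 * α) * ‖c j‖ ^ 2

theorem mul_norm_sq_le_rpow_mul_sobolevSummand {α L y : ℝ} (hα : 1 / 2 ≤ α) (c : ℤ → ℂ)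
    {k : ℤ} (hL : 0 < L) (hLk : L ≤ k) (hyk : y ≤ k) :
    y * ‖c k‖ ^ 2 ≤ L ^ (1 - 2 * α) * sobolevSummand α c k := by
  have hk : (k.natAbs : ℝ) = k := by
    rw [Nat.cast_natAbs, Int.cast_abs, abs_of_pos (hL.trans_le hLk)]
  rw [sobolevSummand, hk, ← mul_assoc]
  gcongr
  exact le_rpow_mul_rpow_of_le (by linarith) hL hLk hyk

theorem mul_norm_sq_sub_conj_le {α L y : ℝ} (hα : 1 / 2 ≤ α) (c : ℤ → ℂ) {k l : ℤ}
    (hL : 0 < L) (hLk : L ≤ k) (hLl : L ≤ l) (hy : 0 ≤ y) (hyk : y ≤ k) (hyl : y ≤ l) :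
    y * ‖c k - conj (c l)‖ ^ 2
      ≤ 2 * L ^ (1 - 2 * α) * (sobolevSummand α c k + sobolevSummand α c l) := by
  have hsq : ‖c k - conj (c l)‖ ^ 2 ≤ 2 * (‖c k‖ ^ 2 + ‖c l‖ ^ 2) := by
    calc ‖c k - conj (c l)‖ ^ 2 ≤ (‖c k‖ + ‖c l‖) ^ 2 := by
          gcongr
          simpa only [Complex.norm_conj] using norm_sub_le (c k) (conj (c l))
      _ ≤ 2 * (‖c k‖ ^ 2 + ‖c l‖ ^ 2) := add_sq_le
  calc y * ‖c k - conj (c l)‖ ^ 2 ≤ 2 * (y * ‖c k‖ ^ 2 + y * ‖c l‖ ^ 2) := by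
        nlinarith [mul_le_mul_of_nonneg_left hsq hy]
    _ ≤ _ := by
        rw [mul_assoc, mul_add (L ^ _)]
        gcongr 2 * (?_ + ?_)
        · exact mul_norm_sq_le_rpow_mul_sobolevSummand hα c hL hLk hyk
        · exact mul_norm_sq_le_rpow_mul_sobolevSummand hα c hL hLl hyl

theorem sum_Icc_mul_norm_sq_sub_conj_le {α : ℝ} (hα : 1 / 2 ≤ α) {c : ℤ → ℂ}
    (hsum : Summable (sobolevSummand α c)) {n m : ℕ} (hnm : n < m) (hodd : Odd m) :
    ∑ k ∈ Icc (((m : ℤ) + 1) / 2) ((n : ℤ) - 1), ((n : ℝ) - k) * ‖c k - conj (c (m - k))‖ ^ 2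
      ≤ 2 * ((m : ℝ) - n + 1) ^ (1 - 2 * α) * ∑' j, sobolevSummand α c j := by
  obtain ⟨t, ht⟩ := hodd
  set L : ℝ := (m : ℝ) - n + 1
  have hL : 0 < L := by
    have : (n : ℝ) < m := by exact_mod_cast hnm
    linarith
  calc _ ≤ ∑ k ∈ Icc (((m : ℤ) + 1) / 2) ((n : ℤ) - 1),
        2 * L ^ (1 - 2 * α) * (sobolevSummand α c k + sobolevSummand α c (m - k)) := by
        refine sum_le_sum fun k hk => ?_
        simp only [mem_Icc] at hk
        have h1 : (m : ℝ) - n + 1 ≤ k := by exact_mod_cast (show (m : ℤ) - n + 1 ≤ k by omega)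
        have h2 : (k : ℝ) ≤ n - 1 := by exact_mod_cast (show k ≤ (n : ℤ) - 1 by omega)
        have h3 : (n : ℝ) ≤ 2 * k := by exact_mod_cast (show (n : ℤ) ≤ 2 * k by omega)
        have hnm' : (n : ℝ) ≤ m := by exact_mod_cast hnm.le
        exact mul_norm_sq_sub_conj_le hα c hL h1 (by push_cast; linarith) (by linarith)
          (by linarith) (by push_cast; linarith)
    _ = 2 * L ^ (1 - 2 * α) * ∑ k ∈ Icc (((m : ℤ) + 1) / 2) ((n : ℤ) - 1),
          (sobolevSummand α c k + sobolevSummand α c (m - k)) := by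
        rw [mul_sum]
    _ ≤ _ := by
        gcongr
        refine sum_add_sum_sub_le_tsum (fun j => ?_) hsum _ fun k hk hk' => ?_
        · unfold sobolevSummand
          positivity
        · simp only [mem_Icc] at hk hk'
          omega

theorem toeplitz_circulant_hs_bound_general (α M : ℝ) (hα : 1 / 2 < α)
    (n m : ℕ) (hnm : n < m) (hodd : Odd m)
    (c : ℤ → ℂ) (hconj : ∀ k : ℤ, c (-k) = (starRingEnd ℂ) (c k))
    (hsum : Summable fun j : ℤ => (j.natAbs : ℝ) ^ (2 * α) * ‖c j‖ ^ 2)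
    (hM' : ‖c 0‖ ^ 2 + (∑' j : ℤ, (j.natAbs : ℝ) ^ (2 * α) * ‖c j‖ ^ 2) ≤ M) :
    let A : Matrix (Fin n) (Fin n) ℂ := fun i j => c ((j : ℤ) - (i : ℤ))
    let B : Matrix (Fin n) (Fin n) ℂ := fun i j =>
      if ((j : ℤ) - (i : ℤ)).natAbs ≤ (m - 1) / 2 then c ((j : ℤ) - (i : ℤ))
      else if (i : ℤ) < (j : ℤ) then c ((j : ℤ) - (i : ℤ) - m)
      else c ((j : ℤ) - (i : ℤ) + m)
    (∑ i : Fin n, ∑ j : Fin n, ‖A i j - B i j‖ ^ 2)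
        = 2 * ∑ k ∈ Finset.Icc (((m : ℤ) + 1) / 2) ((n : ℤ) - 1),
            ((n : ℝ) - (k : ℝ)) * ‖c k - (starRingEnd ℂ) (c ((m : ℤ) - k))‖ ^ 2 ∧
    (∑ i : Fin n, ∑ j : Fin n, ‖A i j - B i j‖ ^ 2)
        ≤ 4 * ((m : ℝ) - (n : ℝ) + 1) ^ (1 - 2 * α) * M := by
  intro A B
  have hentry (i j : Fin n) : A i j - B i j = c (j - i) - circulantSymbol m c (j - i) := by
    simp only [A, B, circulantSymbol, sub_pos]
  have hidentity : ∑ i : Fin n, ∑ j : Fin n, ‖A i j - B i j‖ ^ 2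
      = 2 * ∑ k ∈ Icc (((m : ℤ) + 1) / 2) ((n : ℤ) - 1),
          ((n : ℝ) - k) * ‖c k - conj (c (m - k))‖ ^ 2 := by
    simp only [hentry]
    exact sum_fin_sum_fin_norm_sq_sub_circulantSymbol hconj n (by omega)
  refine ⟨hidentity, ?_⟩
  have hsobolev : ∑' j, sobolevSummand α c j ≤ M := by
    unfold sobolevSummand
    linarith [sq_nonneg ‖c 0‖]
  have hweight : 0 ≤ ((m : ℝ) - n + 1) ^ (1 - 2 * α) := by
    refine Real.rpow_nonneg ?_ _
    have : (n : ℝ) ≤ m := by exact_mod_cast hnm.le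
    linarith
  rw [hidentity]
  calc _ ≤ 2 * (2 * ((m : ℝ) - n + 1) ^ (1 - 2 * α) * ∑' j, sobolevSummand α c j) := by
        gcongr
        exact sum_Icc_mul_norm_sq_sub_conj_le hα.le hsum hnm hodd
    _ ≤ 4 * ((m : ℝ) - n + 1) ^ (1 - 2 * α) * M := by
        linarith [mul_le_mul_of_nonneg_left hsobolev hweight]

/-- Hilbert–Schmidt approximation of a Toeplitz symbol matrix by the upper-left
`n×n` corner of an `m×m` circulant (odd `m`, `n < m < 2(n-1)`): with Fourier
coefficients `c_k` satisfying `c_{-k} = conj c_k` and the Sobolev bound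
`|c₀|² + ∑_j |j|^{2α}|c_j|² ≤ M` for some `α > 1/2`, one has
`‖A_n − Ã_{n,m}‖₂² = 2 ∑_{k=(m+1)/2}^{n-1} (n-k)|c_k − conj c_{m-k}|²
 ≤ 4 (m-n+1)^{1-2α} M`. -/
theorem toeplitz_circulant_hs_bound (α M : ℝ) (hα : 1 / 2 < α) (hM : 1 < M)
    (n m : ℕ) (hnm : n < m) (hm2 : m < 2 * (n - 1)) (hodd : Odd m)
    (c : ℤ → ℂ) (hconj : ∀ k : ℤ, c (-k) = (starRingEnd ℂ) (c k))
    (hsum : Summable fun j : ℤ => (j.natAbs : ℝ) ^ (2 * α) * ‖c j‖ ^ 2)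
    (hM' : ‖c 0‖ ^ 2 + (∑' j : ℤ, (j.natAbs : ℝ) ^ (2 * α) * ‖c j‖ ^ 2) ≤ M) :
    let A : Matrix (Fin n) (Fin n) ℂ := fun i j => c ((j : ℤ) - (i : ℤ))
    let B : Matrix (Fin n) (Fin n) ℂ := fun i j =>
      if ((j : ℤ) - (i : ℤ)).natAbs ≤ (m - 1) / 2 then c ((j : ℤ) - (i : ℤ))
      else if (i : ℤ) < (j : ℤ) then c ((j : ℤ) - (i : ℤ) - m)
      else c ((j : ℤ) - (i : ℤ) + m)
    (∑ i : Fin n, ∑ j : Fin n, ‖A i j - B i j‖ ^ 2)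
        = 2 * ∑ k ∈ Finset.Icc (((m : ℤ) + 1) / 2) ((n : ℤ) - 1),
            ((n : ℝ) - (k : ℝ)) * ‖c k - (starRingEnd ℂ) (c ((m : ℤ) - k))‖ ^ 2 ∧
    (∑ i : Fin n, ∑ j : Fin n, ‖A i j - B i j‖ ^ 2)
        ≤ 4 * ((m : ℝ) - (n : ℝ) + 1) ^ (1 - 2 * α) * M :=
  toeplitz_circulant_hs_bound_general α M hα n m hnm hodd c hconj hsum hM'
end

section
/- Let λ ∈ (1/2,1) and Q₁, Q₂ be positive definite Hermitian matrices with ((1−λ)/λ)I < Q_i < (λ/(1−λ))I. Set R_i = Q_i(Q_i+I)^{-1} and A_i = 2Q_i + I. Then ‖R₁ − R₂‖₂ ≤ (1−λ)^{-1}‖A₁ − A₂‖₂ in Hilbert–Schmidt norm. -/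
open scoped ComplexOrder

/-- Hilbert–Schmidt (Frobenius) norm of a complex matrix. -/
noncomputable def frobNorm {n : ℕ} (A : Matrix (Fin n) (Fin n) ℂ) : ℝ :=
  Real.sqrt (∑ i, ∑ j, ‖A i j‖ ^ 2)

/-!
By the resolvent identity, `R₁ - R₂ = (Q₂ + 1)⁻¹ (Q₁ - Q₂) (Q₁ + 1)⁻¹`. For `Q ≥ 0` we have
`(Q + 1)ᴴ (Q + 1) ≥ 1`, and a matrix `M` with `Mᴴ M ≥ 1` cannot decrease the Frobenius norm,
because `‖M B‖² - ‖B‖² = re tr (Bᴴ (Mᴴ M - 1) B) ≥ 0`. Hence multiplying by `(Q + 1)⁻¹` on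
either side is a Frobenius contraction, and `‖R₁ - R₂‖ ≤ ‖Q₁ - Q₂‖ = ‖A₁ - A₂‖ / 2`, which is
at most `(1 - λ)⁻¹ ‖A₁ - A₂‖`.
-/

open scoped Matrix Matrix.Norms.Frobenius

namespace Matrix

variable {ι 𝕜 : Type*} [Fintype ι] [RCLike 𝕜]

theorem frobenius_norm_sq_eq_re_trace {κ : Type*} [Fintype κ] (A : Matrix ι κ 𝕜) :
    ‖A‖ ^ 2 = RCLike.re (Aᴴ * A).trace := by
  rw [frobenius_norm_def, ← Real.sqrt_eq_rpow, Real.sq_sqrt (by positivity), trace,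
    map_sum, Finset.sum_comm]
  refine Finset.sum_congr rfl fun j _ => ?_
  simp only [diag_apply, mul_apply, conjTranspose_apply, map_sum, Real.rpow_two]
  refine Finset.sum_congr rfl fun i _ => ?_
  rw [RCLike.star_def, RCLike.conj_mul, ← RCLike.ofReal_pow, RCLike.ofReal_re]

variable [DecidableEq ι]

theorem frobenius_norm_le_norm_mul {κ : Type*} [Fintype κ] {M : Matrix ι ι 𝕜}
    (hM : (Mᴴ * M - 1).PosSemidef) (B : Matrix ι κ 𝕜) : ‖B‖ ≤ ‖M * B‖ := by
  have hgap : (M * B)ᴴ * (M * B) - Bᴴ * B = Bᴴ * (Mᴴ * M - 1) * B := by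
    simp only [conjTranspose_mul, Matrix.mul_sub, Matrix.sub_mul, Matrix.mul_one,
      Matrix.mul_assoc]
  rw [← pow_le_pow_iff_left₀ (norm_nonneg _) (norm_nonneg _) two_ne_zero,
    frobenius_norm_sq_eq_re_trace, frobenius_norm_sq_eq_re_trace, ← sub_nonneg, ← map_sub,
    ← trace_sub, hgap]
  exact (RCLike.nonneg_iff.mp (hM.conjTranspose_mul_mul_same B).trace_nonneg).1

theorem mul_inv_add_one_eq_one_sub {R : Type*} [CommRing R] {Q : Matrix ι ι R}
    (h : IsUnit (Q + 1).det) : Q * (Q + 1)⁻¹ = 1 - (Q + 1)⁻¹ :=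
  calc Q * (Q + 1)⁻¹ = (Q + 1 - 1) * (Q + 1)⁻¹ := by rw [add_sub_cancel_right]
    _ = 1 - (Q + 1)⁻¹ := by rw [Matrix.sub_mul, mul_nonsing_inv _ h, Matrix.one_mul]

theorem mul_inv_add_one_sub_mul_inv_add_one {R : Type*} [CommRing R] {Q₁ Q₂ : Matrix ι ι R}
    (h₁ : IsUnit (Q₁ + 1).det) (h₂ : IsUnit (Q₂ + 1).det) :
    Q₁ * (Q₁ + 1)⁻¹ - Q₂ * (Q₂ + 1)⁻¹ = (Q₂ + 1)⁻¹ * (Q₁ - Q₂) * (Q₁ + 1)⁻¹ := by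
  have hdiff : Q₁ - Q₂ = (Q₁ + 1) - (Q₂ + 1) := by abel
  rw [mul_inv_add_one_eq_one_sub h₁, mul_inv_add_one_eq_one_sub h₂, hdiff, Matrix.mul_sub,
    Matrix.sub_mul, nonsing_inv_mul _ h₂, Matrix.one_mul, mul_nonsing_inv_cancel_right _ _ h₁]
  abel

namespace PosSemidef

variable {Q : Matrix ι ι 𝕜}

theorem isUnit_det_add_one (hQ : Q.PosSemidef) : IsUnit (Q + 1).det :=
  (isUnit_iff_isUnit_det _).mp (PosDef.posSemidef_add hQ PosDef.one).isUnit

theorem conjTranspose_add_one_mul_add_one_sub_one (hQ : Q.PosSemidef) :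
    ((Q + 1)ᴴ * (Q + 1) - 1).PosSemidef := by
  have h : (Q + 1)ᴴ * (Q + 1) - 1 = Qᴴ * Q + (Q + Q) := by
    rw [conjTranspose_add, hQ.isHermitian.eq, conjTranspose_one]
    noncomm_ring
  rw [h]
  exact (posSemidef_conjTranspose_mul_self Q).add (hQ.add hQ)

theorem frobenius_norm_inv_add_one_mul_le {κ : Type*} [Fintype κ] (hQ : Q.PosSemidef)
    (C : Matrix ι κ 𝕜) : ‖(Q + 1)⁻¹ * C‖ ≤ ‖C‖ := by
  have h := frobenius_norm_le_norm_mul hQ.conjTranspose_add_one_mul_add_one_sub_one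
    ((Q + 1)⁻¹ * C)
  rwa [← Matrix.mul_assoc, mul_nonsing_inv _ hQ.isUnit_det_add_one, Matrix.one_mul] at h

theorem frobenius_norm_mul_inv_add_one_le {κ : Type*} [Fintype κ] (hQ : Q.PosSemidef)
    (C : Matrix κ ι 𝕜) : ‖C * (Q + 1)⁻¹‖ ≤ ‖C‖ := by
  rw [← frobenius_norm_conjTranspose, ← frobenius_norm_conjTranspose C, conjTranspose_mul,
    conjTranspose_nonsing_inv, conjTranspose_add, hQ.isHermitian.eq, conjTranspose_one]
  exact hQ.frobenius_norm_inv_add_one_mul_le Cᴴ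

theorem frobenius_norm_resolvent_sub_le {Q₁ Q₂ : Matrix ι ι 𝕜}
    (hQ₁ : Q₁.PosSemidef) (hQ₂ : Q₂.PosSemidef) :
    ‖Q₁ * (Q₁ + 1)⁻¹ - Q₂ * (Q₂ + 1)⁻¹‖ ≤ ‖Q₁ - Q₂‖ := by
  rw [mul_inv_add_one_sub_mul_inv_add_one hQ₁.isUnit_det_add_one hQ₂.isUnit_det_add_one]
  calc ‖(Q₂ + 1)⁻¹ * (Q₁ - Q₂) * (Q₁ + 1)⁻¹‖
      ≤ ‖(Q₂ + 1)⁻¹ * (Q₁ - Q₂)‖ := hQ₁.frobenius_norm_mul_inv_add_one_le _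
    _ ≤ ‖Q₁ - Q₂‖ := hQ₂.frobenius_norm_inv_add_one_mul_le _

end PosSemidef

end Matrix

theorem frobNorm_eq_norm {n : ℕ} (A : Matrix (Fin n) (Fin n) ℂ) : frobNorm A = ‖A‖ := by
  rw [Matrix.frobenius_norm_def, frobNorm, Real.sqrt_eq_rpow]
  simp only [Real.rpow_two]

theorem R_difference_hs_bound_general (n : ℕ) (lam : ℝ)
    (hlam1 : 1 / 2 < lam) (hlam2 : lam < 1)
    (Q₁ Q₂ : Matrix (Fin n) (Fin n) ℂ)
    (hQ₁pos : Q₁.PosDef) (hQ₂pos : Q₂.PosDef) :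
    let R₁ := Q₁ * (Q₁ + 1)⁻¹
    let R₂ := Q₂ * (Q₂ + 1)⁻¹
    let A₁ := (2 : ℂ) • Q₁ + 1
    let A₂ := (2 : ℂ) • Q₂ + 1
    frobNorm (R₁ - R₂) ≤ (1 - lam)⁻¹ * frobNorm (A₁ - A₂) := by
  intro R₁ R₂ A₁ A₂
  have hA : A₁ - A₂ = (2 : ℂ) • (Q₁ - Q₂) := by
    simp only [A₁, A₂, smul_sub]
    abel
  have hlam : 1 ≤ (1 - lam)⁻¹ * 2 := by
    rw [inv_mul_eq_div, le_div_iff₀ (by linarith)]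
    linarith
  rw [frobNorm_eq_norm, frobNorm_eq_norm, hA, norm_smul, Complex.norm_two]
  calc ‖R₁ - R₂‖ ≤ ‖Q₁ - Q₂‖ :=
        hQ₁pos.posSemidef.frobenius_norm_resolvent_sub_le hQ₂pos.posSemidef
    _ ≤ (1 - lam)⁻¹ * 2 * ‖Q₁ - Q₂‖ := le_mul_of_one_le_left (norm_nonneg _) hlam
    _ = (1 - lam)⁻¹ * (2 * ‖Q₁ - Q₂‖) := mul_assoc _ _ _

/-- For positive definite Hermitian `Q₁, Q₂` with `((1-λ)/λ) I < Qᵢ < (λ/(1-λ)) I`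
(`λ ∈ (1/2,1)`), setting `Rᵢ = Qᵢ(Qᵢ+I)⁻¹` and `Aᵢ = 2Qᵢ + I`, one has
`‖R₁ − R₂‖₂ ≤ (1-λ)⁻¹ ‖A₁ − A₂‖₂` in Hilbert–Schmidt norm. -/
theorem R_difference_hs_bound (n : ℕ) (lam : ℝ)
    (hlam1 : 1 / 2 < lam) (hlam2 : lam < 1)
    (Q₁ Q₂ : Matrix (Fin n) (Fin n) ℂ)
    (hQ₁ : Q₁.IsHermitian) (hQ₂ : Q₂.IsHermitian)
    (hQ₁pos : Q₁.PosDef) (hQ₂pos : Q₂.PosDef)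
    (hlow₁ : (Q₁ - (((1 - lam) / lam : ℝ) : ℂ) • (1 : Matrix (Fin n) (Fin n) ℂ)).PosDef)
    (hup₁ : (((lam / (1 - lam) : ℝ) : ℂ) • (1 : Matrix (Fin n) (Fin n) ℂ) - Q₁).PosDef)
    (hlow₂ : (Q₂ - (((1 - lam) / lam : ℝ) : ℂ) • (1 : Matrix (Fin n) (Fin n) ℂ)).PosDef)
    (hup₂ : (((lam / (1 - lam) : ℝ) : ℂ) • (1 : Matrix (Fin n) (Fin n) ℂ) - Q₂).PosDef) :
    let R₁ := Q₁ * (Q₁ + 1)⁻¹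
    let R₂ := Q₂ * (Q₂ + 1)⁻¹
    let A₁ := (2 : ℂ) • Q₁ + 1
    let A₂ := (2 : ℂ) • Q₂ + 1
    frobNorm (R₁ - R₂) ≤ (1 - lam)⁻¹ * frobNorm (A₁ - A₂) :=
  R_difference_hs_bound_general n lam hlam1 hlam2 Q₁ Q₂ hQ₁pos hQ₂pos
end
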